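/- arXiv:2505.08951 — 3 statements merged into one kernel-verified Lean document; each statement's English description precedes it below -/
import Mathlib

section
/- Let m ≥ 3 and let d, n be integers with 1 ≤ d < n. Then the Hamming graph H(n,m) has an induced subgraph G on exactly m^{n−1} + m^{⌊(d−1)n/d⌋} vertices whose maximum degree satisfies Δ(G) ≤ d. -/
/-!
Split the `n` coordinates into `B + 1 = ⌊(n - 1)/d⌋ + 1` blocks of at most `d` consecutive
coordinates, and take for `S` the preimage, under the block-sum homomorphism
`(ℤ/m)ⁿ → (ℤ/m)^(B+1)`, of a set `T` of `m^B + 1` vertices each of which has at most one neighbour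
in `T`. The block-sum map is surjective, so `|S| = (m^B + 1) m^(n-B-1) = m^(n-1) + m^⌊(d-1)n/d⌋`.
Changing one coordinate of `x` changes one block sum by the same amount; hence every neighbour of
`x` in `S` lies over the unique neighbour of the image of `x` in `T`, which fixes both the block and
the increment, and leaves at most `d` neighbours.

Over a commutative ring `R` with `2 ≠ 0`, such a set `T ⊆ R^(k+1)` of size `|R|^k + 1` is built by
recursion on the first coordinate: `{0, 1}` for `k = 0`, then the vectors `(0, t)` with `t` in the
previous set together with the `x` with `x₀ ≠ 0` whose coordinate sum is `1`, or `0` when `x₀ = 1`.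
Every vector of `T` has coordinate sum `0` or `1`, which keeps the two parts apart, and two vectors
of the second part are adjacent only if they differ in their first coordinate, which is then `1` in
one and `2` in the other.
-/

open Finset Function

/-- The degree of vertex `x` in the subgraph of the Hamming graph `H(n,m)` induced on `S`:
the number of `y ∈ S` at Hamming distance exactly `1` from `x`. -/
def degIn {n m : ℕ} (S : Finset (Fin n → Fin m)) (x : Fin n → Fin m) : ℕ :=
  (S.filter fun y => hammingDist x y = 1).card

section Hamming

variable {ι A : Type*} [Fintype ι] [DecidableEq ι] [AddGroup A] [DecidableEq A]

theorem hammingNorm_eq_one_iff {z : ι → A} :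
    hammingNorm z = 1 ↔ ∃ i a, a ≠ 0 ∧ z = Pi.single i a := by
  constructor
  · intro h
    obtain ⟨i, hi⟩ := card_eq_one.mp h
    have hsupp (j : ι) : z j ≠ 0 ↔ j = i := by
      simpa using congrArg (j ∈ ·) hi
    refine ⟨i, z i, (hsupp i).mpr rfl, funext fun j => ?_⟩
    by_cases hj : j = i
    · subst hj; simp
    · simpa [hj] using (hsupp j).not.mpr hj
  · rintro ⟨i, a, ha, rfl⟩
    refine card_eq_one.mpr ⟨i, ?_⟩
    ext j
    by_cases hj : j = i <;> simp [Pi.single_apply, hj, ha]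

theorem hammingDist_eq_one_iff {x y : ι → A} :
    hammingDist x y = 1 ↔ ∃ i a, a ≠ 0 ∧ y = x + Pi.single i a := by
  simp only [hammingDist_eq_hammingNorm, hammingNorm_eq_one_iff, neg_add_eq_iff_eq_add]

end Hamming

theorem Pi.eq_of_single_eq_single {ι A : Type*} [DecidableEq ι] [Zero A] {i j : ι} {a b : A}
    (ha : a ≠ 0) (h : (Pi.single i a : ι → A) = Pi.single j b) : i = j ∧ a = b := by
  have hij : i = j := by
    by_contra hij
    exact ha (by simpa [hij] using congrFun h i)
  subst hij
  exact ⟨rfl, Pi.single_injective i h⟩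

def MaxDegreeLeOne {ι α : Type*} [Fintype ι] [DecidableEq α] (T : Finset (ι → α)) : Prop :=
  ∀ s ∈ T, ∀ t ∈ T, ∀ t' ∈ T, hammingDist s t = 1 → hammingDist s t' = 1 → t = t'

theorem AddMonoidHom.card_preimage_mul_card {G H : Type*} [AddGroup G] [Fintype G] [AddGroup H]
    [Fintype H] [DecidableEq H] (f : G →+ H) (hf : Surjective f) (U : Finset H) :
    #{g | f g ∈ U} * Fintype.card H = #U * Fintype.card G := by
  have hfib (h : H) : #{g | f g = h} = #{g | f g = 0} :=
    AddMonoidHom.card_fiber_eq_of_mem_range f (hf h) ⟨0, map_zero f⟩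
  have hpre : #{g | f g ∈ U} = ∑ h ∈ U, #{g | f g = h} := by
    rw [card_eq_sum_card_fiberwise (s := univ.filter (f · ∈ U)) (t := U) (f := f)
      (fun g hg => (mem_filter.mp hg).2)]
    refine sum_congr rfl fun h hh => congrArg card ?_
    ext g; simp only [mem_filter, mem_univ, true_and, and_iff_right_iff_imp]
    rintro rfl; exact hh
  have hG : Fintype.card G = ∑ h, #{g | f g = h} :=
    card_eq_sum_card_fiberwise (fun _ _ => mem_univ _)
  simp only [hpre, hG, hfib, sum_const, smul_eq_mul, card_univ]
  ring

section BlockSum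

variable {ι γ A : Type*} [Fintype ι] [DecidableEq γ]

def blockSum [AddCommMonoid A] (φ : ι → γ) : (ι → A) →+ (γ → A) where
  toFun x l := ∑ i with φ i = l, x i
  map_zero' := by ext; simp
  map_add' x y := by ext; simp [sum_add_distrib]

theorem blockSum_apply [AddCommMonoid A] (φ : ι → γ) (x : ι → A) (l : γ) :
    blockSum φ x l = ∑ i with φ i = l, x i := rfl

variable [DecidableEq ι]

theorem blockSum_single [AddCommMonoid A] (φ : ι → γ) (i : ι) (a : A) :
    blockSum φ (Pi.single i a) = Pi.single (φ i) a := by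
  ext l
  simp [blockSum_apply, Pi.single_apply, eq_comm]

theorem blockSum_surjective [AddCommMonoid A] [Fintype γ] {φ : ι → γ} (hφ : Surjective φ) :
    Surjective (blockSum (A := A) φ) := fun τ =>
  ⟨∑ l, Pi.single (surjInv hφ l) (τ l), by
    simp [map_sum, blockSum_single, surjInv_eq hφ, univ_sum_single]⟩

theorem card_blockSum_preimage [AddCommGroup A] [Fintype A] [DecidableEq A] [Fintype γ]
    {φ : ι → γ} (hφ : Surjective φ) (U : Finset (γ → A)) :
    #{x | blockSum φ x ∈ U} = #U * Fintype.card A ^ (Fintype.card ι - Fintype.card γ) := by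
  have h := (blockSum φ).card_preimage_mul_card (blockSum_surjective hφ) U
  have hγι : Fintype.card γ ≤ Fintype.card ι := Fintype.card_le_of_surjective φ hφ
  rw [Fintype.card_fun, Fintype.card_fun, ← Nat.sub_add_cancel hγι, pow_add,
    ← mul_assoc] at h
  exact Nat.eq_of_mul_eq_mul_right (pow_pos Fintype.card_pos _) h

variable [Fintype γ] [AddCommGroup A] [Fintype A] [DecidableEq A]

theorem card_neighbors_blockSum_preimage_le {φ : ι → γ} {T : Finset (γ → A)}
    (hT : MaxDegreeLeOne T) {d : ℕ} (hφ : ∀ l, #{i | φ i = l} ≤ d) {x : ι → A}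
    (hx : blockSum φ x ∈ T) :
    #((univ.filter fun y => blockSum φ y ∈ T).filter fun y => hammingDist x y = 1) ≤ d := by
  set N := (univ.filter fun y => blockSum φ y ∈ T).filter fun y => hammingDist x y = 1
  have hmem {y} (hy : y ∈ N) : ∃ i a, a ≠ 0 ∧ y = x + Pi.single i a ∧
      blockSum φ x + Pi.single (φ i) a ∈ T := by
    obtain ⟨hyT, hxy⟩ := mem_filter.mp hy
    obtain ⟨i, a, ha, rfl⟩ := hammingDist_eq_one_iff.mp hxy
    refine ⟨i, a, ha, rfl, ?_⟩
    simpa [map_add, blockSum_single] using hyT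
  rcases N.eq_empty_or_nonempty with hN | ⟨y₀, hy₀⟩
  · simp [hN]
  obtain ⟨i₀, a₀, ha₀, -, hT₀⟩ := hmem hy₀
  have hsub : N ⊆ image (fun i => x + Pi.single i a₀) {i | φ i = φ i₀} := by
    intro y hy
    obtain ⟨i, a, ha, rfl, hTi⟩ := hmem hy
    have hsame := hT _ hx _ hTi _ hT₀ (hammingDist_eq_one_iff.mpr ⟨_, _, ha, rfl⟩)
      (hammingDist_eq_one_iff.mpr ⟨_, _, ha₀, rfl⟩)
    obtain ⟨hi, rfl⟩ := Pi.eq_of_single_eq_single ha (add_left_cancel hsame)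
    exact mem_image.mpr ⟨i, by simpa using hi, rfl⟩
  exact (card_le_card hsub).trans (card_image_le.trans (hφ _))

end BlockSum

section FinTuple

variable {M : Type*} [AddCommMonoid M]

theorem sum_add_pi_single {ι : Type*} [Fintype ι] [DecidableEq ι] (x : ι → M) (i : ι)
    (a : M) :
    ∑ j, (x + Pi.single i a : ι → M) j = ∑ j, x j + a := by
  simp [sum_add_distrib]

theorem Fin.tail_add_single_zero {k : ℕ} (x : Fin (k + 1) → M) (a : M) :
    Fin.tail (x + Pi.single 0 a) = Fin.tail x := by
  ext j; simp [Fin.tail, Fin.succ_ne_zero]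

theorem Fin.tail_add_single_succ {k : ℕ} (x : Fin (k + 1) → M) (j : Fin k) (a : M) :
    Fin.tail (x + Pi.single j.succ a) = Fin.tail x + Pi.single j a := by
  ext i; simp [Fin.tail, Pi.single_apply]

end FinTuple

section LowDegreeSet

variable {R : Type*} [CommRing R] [DecidableEq R]

def leadSum (a : R) : R := if a = 1 then 0 else 1

def leadPartner (a : R) : R := if a = 1 then 2 else 1

theorem add_ne_leadSum (h2 : (2 : R) ≠ 0) {a c : R} (ha : a ≠ 0) (hc : c = 0 ∨ c = 1) :
    a + c ≠ leadSum a := by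
  unfold leadSum
  split_ifs with h1 <;> rcases hc with rfl | rfl
  · simp_all
  · exact fun h => h2 (by linear_combination h - h1)
  · exact fun h => h1 (by simpa using h)
  · exact fun h => ha (by simpa using h)

theorem eq_leadPartner {a b : R} (hba : b ≠ a) (h : b - leadSum b = a - leadSum a) :
    b = leadPartner a := by
  unfold leadSum leadPartner at *
  by_cases ha : a = 1 <;> by_cases hb : b = 1 <;> simp only [ha, hb, if_true, if_false] at h ⊢
  · exact absurd (hb.trans ha.symm) hba
  · linear_combination h
  · exact absurd (by linear_combination h) hba

variable [Fintype R]

def lowDegreeSet : (k : ℕ) → Finset (Fin (k + 1) → R)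
  | 0 => {0, 1}
  | k + 1 =>
    {x | (x 0 = 0 ∧ Fin.tail x ∈ lowDegreeSet k) ∨ (x 0 ≠ 0 ∧ ∑ i, x i = leadSum (x 0))}

theorem mem_lowDegreeSet_succ {k : ℕ} {x : Fin (k + 2) → R} :
    x ∈ lowDegreeSet (k + 1) ↔
      (x 0 = 0 ∧ Fin.tail x ∈ lowDegreeSet k) ∨ (x 0 ≠ 0 ∧ ∑ i, x i = leadSum (x 0)) := by
  simp [lowDegreeSet]

theorem sum_eq_zero_or_one_of_mem_lowDegreeSet {k : ℕ} {x : Fin (k + 1) → R}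
    (hx : x ∈ lowDegreeSet k) :
    ∑ i, x i = 0 ∨ ∑ i, x i = 1 := by
  induction k with
  | zero =>
    simp only [lowDegreeSet, mem_insert, mem_singleton] at hx
    rcases hx with rfl | rfl <;> simp
  | succ k ih =>
    rcases mem_lowDegreeSet_succ.mp hx with ⟨hx0, hx⟩ | ⟨-, hx⟩
    · rw [Fin.sum_univ_succ, hx0, zero_add]
      exact ih hx
    · rw [hx, leadSum]
      split_ifs <;> simp

theorem lowDegreeSet_neighbor_of_head_eq_zero (h2 : (2 : R) ≠ 0) {k : ℕ} {s t : Fin (k + 2) → R}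
    (hs0 : s 0 = 0) (hs : Fin.tail s ∈ lowDegreeSet k) (ht : t ∈ lowDegreeSet (k + 1))
    (hst : hammingDist s t = 1) :
    t 0 = 0 ∧ Fin.tail t ∈ lowDegreeSet k ∧ hammingDist (Fin.tail s) (Fin.tail t) = 1 := by
  obtain ⟨i, a, ha, rfl⟩ := hammingDist_eq_one_iff.mp hst
  induction i using Fin.cases with
  | zero =>
    exfalso
    rcases mem_lowDegreeSet_succ.mp ht with ⟨ht0, -⟩ | ⟨-, hsum⟩
    · exact ha (by simpa [hs0] using ht0)
    have hsum_s : ∑ i, s i = ∑ i, Fin.tail s i := by rw [Fin.sum_univ_succ, hs0, zero_add]; rfl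
    rw [sum_add_pi_single, hsum_s] at hsum
    simp only [Pi.add_apply, hs0, Pi.single_eq_same, zero_add] at hsum
    exact add_ne_leadSum h2 ha (sum_eq_zero_or_one_of_mem_lowDegreeSet hs) (by rw [← hsum]; ring)
  | succ j =>
    have ht0 : (s + Pi.single j.succ a : Fin (k + 2) → R) 0 = 0 := by simp [hs0, Fin.succ_ne_zero]
    rcases mem_lowDegreeSet_succ.mp ht with ⟨-, ht⟩ | ⟨ht0', -⟩
    · refine ⟨ht0, ht, ?_⟩
      rw [Fin.tail_add_single_succ]
      exact hammingDist_eq_one_iff.mpr ⟨j, a, ha, rfl⟩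
    · exact absurd ht0 ht0'

theorem lowDegreeSet_neighbor_of_head_ne_zero (h2 : (2 : R) ≠ 0) {k : ℕ} {s t : Fin (k + 2) → R}
    (hs0 : s 0 ≠ 0) (hs : ∑ i, s i = leadSum (s 0)) (ht : t ∈ lowDegreeSet (k + 1))
    (hst : hammingDist s t = 1) :
    t = s + Pi.single 0 (leadPartner (s 0) - s 0) := by
  obtain ⟨i, a, ha, rfl⟩ := hammingDist_eq_one_iff.mp hst
  induction i using Fin.cases with
  | zero =>
    rcases mem_lowDegreeSet_succ.mp ht with ⟨ht0, ht⟩ | ⟨ht0, hsum⟩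
    · exfalso
      rw [Fin.tail_add_single_zero] at ht
      rw [Fin.sum_univ_succ] at hs
      exact add_ne_leadSum h2 hs0 (sum_eq_zero_or_one_of_mem_lowDegreeSet ht) hs
    · rw [sum_add_pi_single, hs] at hsum
      simp only [Pi.add_apply, Pi.single_eq_same] at hsum
      have hb := eq_leadPartner (b := s 0 + a) (a := s 0) (by simpa using ha)
        (by linear_combination hsum)
      rw [← hb, add_sub_cancel_left]
  | succ j =>
    exfalso
    rcases mem_lowDegreeSet_succ.mp ht with ⟨ht0, -⟩ | ⟨-, hsum⟩
    · exact hs0 (by simpa [Fin.succ_ne_zero] using ht0)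
    · rw [sum_add_pi_single, hs] at hsum
      exact ha (by simpa [Fin.succ_ne_zero] using hsum)

theorem maxDegreeLeOne_lowDegreeSet (h2 : (2 : R) ≠ 0) (k : ℕ) :
    MaxDegreeLeOne (lowDegreeSet (R := R) k) := by
  induction k with
  | zero =>
    intro s hs t ht t' ht' hst hst'
    simp only [lowDegreeSet, mem_insert, mem_singleton] at hs ht ht'
    rcases hs with rfl | rfl <;> rcases ht with rfl | rfl <;> rcases ht' with rfl | rfl <;>
      simp_all
  | succ k ih =>
    intro s hs t ht t' ht' hst hst'
    rcases mem_lowDegreeSet_succ.mp hs with ⟨hs0, hs⟩ | ⟨hs0, hs⟩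
    · obtain ⟨ht0, htT, hd⟩ := lowDegreeSet_neighbor_of_head_eq_zero h2 hs0 hs ht hst
      obtain ⟨ht0', htT', hd'⟩ := lowDegreeSet_neighbor_of_head_eq_zero h2 hs0 hs ht' hst'
      rw [← Fin.cons_self_tail t, ← Fin.cons_self_tail t', ht0, ht0', ih _ hs _ htT _ htT' hd hd']
    · rw [lowDegreeSet_neighbor_of_head_ne_zero h2 hs0 hs ht hst,
        lowDegreeSet_neighbor_of_head_ne_zero h2 hs0 hs ht' hst']

theorem card_head_ne_zero_sum_eq_leadSum (k : ℕ) :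
    #{x : Fin (k + 2) → R | x 0 ≠ 0 ∧ ∑ i, x i = leadSum (x 0)} =
      (Fintype.card R - 1) * Fintype.card R ^ k := by
  let f : (Fin (k + 2) → R) →+ R × R :=
    { toFun x := (x 0, ∑ i, x i)
      map_zero' := by simp
      map_add' x y := by simp [sum_add_distrib] }
  have hf : Function.Surjective f := fun p =>
    ⟨Pi.single 0 p.1 + Pi.single 1 (p.2 - p.1), by simp [f, sum_add_distrib]⟩
  let U : Finset (R × R) := ({0}ᶜ : Finset R).image fun a => (a, leadSum a)
  have hU : #U = Fintype.card R - 1 := by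
    rw [card_image_of_injective _ fun a b h => congrArg Prod.fst h, card_compl, card_singleton]
  have h := f.card_preimage_mul_card hf U
  have hpre : (univ.filter fun x => f x ∈ U) =
      univ.filter fun x : Fin (k + 2) → R => x 0 ≠ 0 ∧ ∑ i, x i = leadSum (x 0) := by
    ext x; simp [f, U, eq_comm]
  rw [hpre, hU, Fintype.card_prod, Fintype.card_fun, Fintype.card_fin] at h
  have hR : 0 < Fintype.card R := Fintype.card_pos
  refine Nat.eq_of_mul_eq_mul_right (Nat.mul_pos hR hR) ?_
  rw [h]
  ring

theorem card_lowDegreeSet [Nontrivial R] (k : ℕ) :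
    #(lowDegreeSet (R := R) k) = Fintype.card R ^ k + 1 := by
  induction k with
  | zero => simp [lowDegreeSet]
  | succ k ih =>
    have hlead : #{x : Fin (k + 2) → R | x 0 = 0 ∧ Fin.tail x ∈ lowDegreeSet k} =
        #(lowDegreeSet (R := R) k) :=
      card_nbij' Fin.tail (fun y => (Fin.cons 0 y : Fin (k + 2) → R)) (fun x hx => by simp_all)
        (fun y hy => by simp_all)
        (fun x hx => by
          have hx0 : x 0 = 0 := by simp_all
          simp [← hx0])
        (fun y _ => Fin.tail_cons _ _)
    rw [lowDegreeSet, filter_or,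
      card_union_of_disjoint (disjoint_filter.mpr fun x _ h h' => h'.1 h.1), hlead,
      card_head_ne_zero_sum_eq_leadSum, ih]
    obtain ⟨c, hc⟩ := Nat.exists_eq_add_one_of_ne_zero (Fintype.card_ne_zero (α := R))
    rw [hc, Nat.add_sub_cancel]
    ring

end LowDegreeSet

section BlockIndex

variable {d n : ℕ}

def blockIndex (d n : ℕ) (i : Fin n) : Fin ((n - 1) / d + 1) :=
  ⟨i / d, Nat.lt_succ_of_le (Nat.div_le_div_right (by omega))⟩

theorem blockIndex_surjective (hd : 0 < d) (hn : 0 < n) : Function.Surjective (blockIndex d n) :=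
  fun l => ⟨⟨l * d, by
    have := Nat.div_mul_le_self (n - 1) d
    have := Nat.mul_le_mul_right d (Nat.lt_succ_iff.mp l.isLt)
    omega⟩, Fin.ext (by simp [blockIndex, Nat.mul_div_cancel _ hd])⟩

theorem card_blockIndex_fiber_le (hd : 0 < d) (l : Fin ((n - 1) / d + 1)) :
    #{i | blockIndex d n i = l} ≤ d := by
  have hmaps : ∀ i ∈ ({i | blockIndex d n i = l} : Finset (Fin n)),
      i.val ∈ Ico (l * d) (l * d + d) := by
    intro i hi
    have := (Nat.div_eq_iff hd).mp (congrArg Fin.val (mem_filter.mp hi).2)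
    simp only [mem_Ico]
    omega
  simpa using card_le_card_of_injOn Fin.val hmaps Fin.val_injective.injOn

theorem sub_blocks_eq_pred_mul_div (hd : 0 < d) : n - ((n - 1) / d + 1) = (d - 1) * n / d := by
  obtain ⟨e, rfl⟩ : ∃ e, d = e + 1 := ⟨d - 1, by omega⟩
  rcases Nat.eq_zero_or_pos n with rfl | hn
  · simp
  obtain ⟨q, r, hr, rfl⟩ : ∃ q r, r ≤ e ∧ n = (e + 1) * q + r + 1 :=
    ⟨(n - 1) / (e + 1), (n - 1) % (e + 1), Nat.lt_succ_iff.mp (Nat.mod_lt _ (by omega)),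
      by have := Nat.div_add_mod (n - 1) (e + 1); omega⟩
  have hq : ((e + 1) * q + r + 1 - 1) / (e + 1) = q := by
    rw [Nat.add_sub_cancel, Nat.mul_add_div (by omega), Nat.div_eq_of_lt (by omega), add_zero]
  rw [hq, Nat.add_sub_cancel, show (e + 1) * q + r + 1 - (q + 1) = e * q + r by
    rw [add_mul, one_mul]; omega]
  symm
  apply Nat.div_eq_of_lt_le <;> nlinarith

end BlockIndex

/-- Let `m ≥ 3` and `1 ≤ d < n`. Then `H(n,m)` has an induced subgraph on exactly
`m^(n-1) + m^(⌊(d-1)n/d⌋)` vertices with maximum degree at most `d`. -/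
theorem large_subgraph_small_degree (m d n : ℕ) (hm : 3 ≤ m) (hd : 1 ≤ d) (hdn : d < n) :
    ∃ S : Finset (Fin n → Fin m),
      S.card = m ^ (n - 1) + m ^ ((d - 1) * n / d) ∧
      ∀ x ∈ S, degIn S x ≤ d := by
  have : NeZero m := ⟨by omega⟩
  let _ : CommRing (Fin m) := Fin.instCommRing m
  have : Nontrivial (Fin m) := Fin.nontrivial_iff_two_le.mpr (by omega)
  have h2 : (2 : Fin m) ≠ 0 := fun h => by
    have := congrArg Fin.val h
    simp [Nat.mod_eq_of_lt (show 2 < m by omega)] at this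
  have hφ := blockIndex_surjective (show 0 < d by omega) (show 0 < n by omega)
  let T := lowDegreeSet (R := Fin m) ((n - 1) / d)
  refine ⟨({x | blockSum (blockIndex d n) x ∈ T} : Finset _), ?_, fun x hx => ?_⟩
  · rw [card_blockSum_preimage hφ, card_lowDegreeSet, Fintype.card_fin, Fintype.card_fin,
      Fintype.card_fin, ← sub_blocks_eq_pred_mul_div (by omega), add_mul, one_mul, ← pow_add]
    congr 2
    have := Nat.div_le_self (n - 1) d
    omega
  · exact card_neighbors_blockSum_preimage_le (maxDegreeLeOne_lowDegreeSet h2 _)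
      (card_blockIndex_fiber_le (by omega)) (mem_filter.mp hx).2
end

section
/- Let m ≥ 2 and n ≥ 1 be integers and let ε > 0 be a real number. Then every induced subgraph G of the Hamming graph H(n,m) on more than (1/m + ε)·m^n vertices has maximum degree Δ(G) ≥ 2εn / ((m−1)(1/m + ε)). -/
/-!
Fix a direction `i`. The lines in direction `i` partition `[m]^n` into `m^(n-1)` cliques, and a
line meeting `S` in `k` vertices contributes `k(k-1) ≥ 2k - 2` to the degree sum of `S` in that
direction. Summing over lines and directions, the average degree of `S` is at least
`2n(1 - m^(n-1)/|S|)`, which exceeds `2εn/(1/m + ε)` as soon as `|S| > (1/m + ε)m^n`.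
-/

open Finset

theorem two_mul_le_mul_sub_one_add_two (k : ℕ) : 2 * k ≤ k * (k - 1) + 2 := by
  rcases k with _ | k
  · simp
  · rw [Nat.add_sub_cancel]; nlinarith [Nat.le_mul_self k]

theorem hammingDist_eq_one_iff_s6 {ι α : Type*} [Fintype ι] [DecidableEq α] {x y : ι → α} :
    hammingDist x y = 1 ↔ ∃ i, x i ≠ y i ∧ ∀ j ≠ i, x j = y j := by
  simp only [hammingDist, card_eq_one, eq_singleton_iff_unique_mem, mem_filter, mem_univ,
    true_and]
  refine exists_congr fun i => and_congr_right fun _ => forall_congr' fun j => ?_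
  rw [not_imp_comm]

section HammingGraph

variable {ι α : Type*} [Fintype ι] [DecidableEq ι] [DecidableEq α]

def neighborsAlong (S : Finset (ι → α)) (i : ι) (x : ι → α) : Finset (ι → α) :=
  {y ∈ S | x i ≠ y i ∧ ∀ j ≠ i, x j = y j}

theorem card_filter_hammingDist_eq_one (S : Finset (ι → α)) (x : ι → α) :
    #{y ∈ S | hammingDist x y = 1} = ∑ i, #(neighborsAlong S i x) := by
  rw [← card_biUnion]
  · congr 1
    ext y
    simp [neighborsAlong, hammingDist_eq_one_iff_s6]
  · intro i _ i' _ hii'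
    simp only [neighborsAlong, disjoint_left, mem_filter]
    rintro y ⟨-, hyi, -⟩ ⟨-, -, hy'⟩
    exact hyi (hy' i hii')

theorem neighborsAlong_eq_erase (S : Finset (ι → α)) (i : ι) (x : ι → α) :
    neighborsAlong S i x =
      {y ∈ S | Subtype.restrict (· ≠ i) y = Subtype.restrict (· ≠ i) x}.erase x := by
  ext y
  simp only [neighborsAlong, mem_erase, mem_filter, funext_iff, Subtype.forall,
    Subtype.restrict]
  constructor
  · rintro ⟨hy, hi, hoff⟩
    exact ⟨fun h => hi (h ▸ rfl), hy, fun j hj => (hoff j hj).symm⟩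
  · rintro ⟨hyx, hy, hoff⟩
    refine ⟨hy, fun hi => hyx (funext fun j => ?_), fun j hj => (hoff j hj).symm⟩
    by_cases hj : j = i
    · exact hj ▸ hi.symm
    · exact hoff j hj

variable [Fintype α]

theorem two_mul_card_le_sum_card_neighborsAlong (S : Finset (ι → α)) (i : ι) :
    2 * #S ≤ ∑ x ∈ S, #(neighborsAlong S i x) + 2 * Fintype.card α ^ (Fintype.card ι - 1) := by
  set p : (ι → α) → ({j // j ≠ i} → α) := Subtype.restrict (· ≠ i)
  set k : ({j // j ≠ i} → α) → ℕ := fun ℓ => #{x ∈ S | p x = ℓ}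
  have hS : #S = ∑ ℓ, k ℓ := card_eq_sum_card_fiberwise fun _ _ => mem_univ _
  have hnbr : ∑ x ∈ S, #(neighborsAlong S i x) = ∑ ℓ, k ℓ * (k ℓ - 1) := by
    rw [← sum_fiberwise S p]
    refine sum_congr rfl fun ℓ _ => ?_
    rw [← smul_eq_mul, ← sum_const]
    refine sum_congr rfl fun x hx => ?_
    obtain ⟨-, rfl⟩ := mem_filter.mp hx
    rw [neighborsAlong_eq_erase, card_erase_of_mem hx]
  calc 2 * #S = ∑ ℓ, 2 * k ℓ := by rw [hS, mul_sum]
    _ ≤ ∑ ℓ, (k ℓ * (k ℓ - 1) + 2) :=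
        sum_le_sum fun ℓ _ => two_mul_le_mul_sub_one_add_two (k ℓ)
    _ = _ := by
        rw [sum_add_distrib, hnbr, sum_const, card_univ, smul_eq_mul, mul_comm]
        simp [Fintype.card_subtype_compl]

theorem two_mul_card_le_sum_card_filter_hammingDist_eq_one (S : Finset (ι → α)) :
    2 * Fintype.card ι * #S ≤ ∑ x ∈ S, #{y ∈ S | hammingDist x y = 1} +
      2 * Fintype.card ι * Fintype.card α ^ (Fintype.card ι - 1) := by
  simp_rw [card_filter_hammingDist_eq_one]
  rw [sum_comm]
  calc 2 * Fintype.card ι * #S = ∑ _ : ι, 2 * #S := by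
        rw [sum_const, card_univ, smul_eq_mul]; ring
    _ ≤ ∑ i, (∑ x ∈ S, #(neighborsAlong S i x) + 2 * Fintype.card α ^ (Fintype.card ι - 1)) :=
        sum_le_sum fun i _ => two_mul_card_le_sum_card_neighborsAlong S i
    _ = _ := by rw [sum_add_distrib, sum_const, card_univ, smul_eq_mul]; ring

theorem exists_le_card_filter_hammingDist_eq_one {S : Finset (ι → α)} (hS : S.Nonempty) :
    ∃ x ∈ S, 2 * (Fintype.card ι : ℝ) * (1 - Fintype.card α ^ (Fintype.card ι - 1) / #S) ≤
      #{y ∈ S | hammingDist x y = 1} := by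
  refine exists_le_of_sum_le hS ?_
  have hS0 : (#S : ℝ) ≠ 0 := by exact_mod_cast hS.card_pos.ne'
  have h : (2 * Fintype.card ι * #S : ℝ) ≤ ∑ x ∈ S, (#{y ∈ S | hammingDist x y = 1} : ℝ) +
      2 * Fintype.card ι * Fintype.card α ^ (Fintype.card ι - 1) := by
    exact_mod_cast two_mul_card_le_sum_card_filter_hammingDist_eq_one S
  rw [sum_const, nsmul_eq_mul, mul_left_comm, mul_one_sub, mul_div_cancel₀ _ hS0]
  linarith

end HammingGraph

theorem two_mul_mul_div_le_two_mul_one_sub_div {m n P s ε : ℝ} (hm : 2 ≤ m) (hn : 0 ≤ n)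
    (hε : 0 < ε) (hP : 0 ≤ P) (hs : (1 / m + ε) * (m * P) < s) :
    2 * ε * n / ((m - 1) * (1 / m + ε)) ≤ 2 * n * (1 - P / s) := by
  have hm0 : 0 < m := by linarith
  have hPs : P * (1 + ε * m) < s := by
    convert hs using 1; field_simp
  have hs0 : 0 < s := lt_of_le_of_lt (by positivity) hPs
  calc 2 * ε * n / ((m - 1) * (1 / m + ε)) ≤ 2 * ε * n / (1 / m + ε) := by
        gcongr; exact le_mul_of_one_le_left (by positivity) (by linarith)
    _ = 2 * n * (1 - 1 / (1 + ε * m)) := by field_simp; ring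
    _ ≤ 2 * n * (1 - P / s) := by
        gcongr 2 * n * (1 - ?_)
        rw [div_le_div_iff₀ hs0 (by positivity)]
        linarith

/-- Let `m ≥ 2`, `n ≥ 1` and `ε > 0`. Every induced subgraph of `H(n,m)` on more than
`(1/m + ε)·m^n` vertices has maximum degree at least `2εn / ((m-1)(1/m + ε))`. -/
theorem maxDegree_of_large_subgraph (m n : ℕ) (hm : 2 ≤ m) (hn : 1 ≤ n)
    (ε : ℝ) (hε : 0 < ε)
    (S : Finset (Fin n → Fin m))
    (hcard : (1 / m + ε) * (m : ℝ) ^ n < S.card) :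
    ∃ x ∈ S, 2 * ε * n / (((m : ℝ) - 1) * (1 / m + ε)) ≤ (degIn S x : ℝ) := by
  have hS : S.Nonempty :=
    card_pos.mp (by exact_mod_cast (by positivity : (0 : ℝ) ≤ _).trans_lt hcard)
  obtain ⟨x, hxS, hx⟩ := exists_le_card_filter_hammingDist_eq_one hS
  simp only [Fintype.card_fin] at hx
  refine ⟨x, hxS, le_trans ?_ hx⟩
  refine two_mul_mul_div_le_two_mul_one_sub_div (by exact_mod_cast hm) n.cast_nonneg hε
    (by positivity) ?_
  rwa [← pow_succ', Nat.sub_add_cancel hn]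
end

section
/- Let m ≥ 1 and n ≥ n' ≥ 1 be integers and let P_1, …, P_{n'} be a partition of {1,…,n} into n' nonempty blocks each of size at most ⌈n/n'⌉, and let σ : (ℤ/mℤ)^n → (ℤ/mℤ)^{n'} be the block-sum map σ(x) = (Σ_{i∈P_1} x_i, …, Σ_{i∈P_{n'}} x_i). Then for every x ∈ (ℤ/mℤ)^n and every y' ∈ (ℤ/mℤ)^{n'} at Hamming distance 1 from σ(x), the number of points y ∈ σ^{-1}(y') at Hamming distance 1 from x is at most ⌈n/n'⌉. -/
open Finset

/-! A Hamming neighbour `y` of `x` differs from `x` in exactly one coordinate `j`. If `y` lies in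
the fibre over `y'` and `y'` differs from `σ x` in block `i₀`, then `j` must lie in `P i₀` (otherwise
the `i₀`-th block sum would not move), and the new value at `j` is forced by that block sum. So `y`
is determined by `j ∈ P i₀`, and there are at most `#(P i₀) ≤ ⌈n/n'⌉` such `y`. -/

section

variable {ι β : Type*} [Fintype ι] [DecidableEq ι] [DecidableEq β]

theorem exists_eq_update_of_hammingDist_eq_one {x y : ι → β} (h : hammingDist x y = 1) :
    ∃ j, y = Function.update x j (y j) := by
  obtain ⟨j, hj⟩ := card_eq_one.mp h
  refine ⟨j, funext fun k => ?_⟩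
  by_cases hk : k = j
  · simp [hk]
  · have hxy : x k = y k := by
      by_contra hne
      exact hk (mem_singleton.mp (hj ▸ mem_filter.mpr ⟨mem_univ k, hne⟩))
    simp [hk, hxy]

theorem setOf_sum_eq_and_hammingDist_eq_one_subset_image [AddCommGroup β] (s : Finset ι)
    (x : ι → β) {c : β} (hc : ∑ j ∈ s, x j ≠ c) :
    {y | ∑ j ∈ s, y j = c ∧ hammingDist x y = 1} ⊆
      (fun j => Function.update x j (x j + (c - ∑ k ∈ s, x k))) '' s := by
  rintro y ⟨hsum, hdist⟩
  obtain ⟨j, hy⟩ := exists_eq_update_of_hammingDist_eq_one hdist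
  have hj : j ∈ s := by
    by_contra hj
    rw [hy, sum_update_of_notMem hj] at hsum
    exact hc hsum
  refine ⟨j, hj, ?_⟩
  rw [hy, sum_update_of_mem hj] at hsum
  rw [hy, ← hsum, sum_eq_add_sum_sdiff_singleton_of_mem hj]
  simp only [add_sub_add_right_eq_sub, add_sub_cancel]

end

theorem blockSum_fiber_neighbors_general (m n n' : ℕ)
    (P : Fin n' → Finset (Fin n))
    (hsize : ∀ i, (P i).card ≤ (n + n' - 1) / n')
    (x : Fin n → ZMod m) (y' : Fin n' → ZMod m)
    (hy' : hammingDist (fun i => ∑ j ∈ P i, x j) y' = 1) :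
    Nat.card {y : Fin n → ZMod m //
        (fun i => ∑ j ∈ P i, y j) = y' ∧ hammingDist x y = 1}
      ≤ (n + n' - 1) / n' := by
  have hσx : (fun i => ∑ j ∈ P i, x j) ≠ y' := hammingDist_ne_zero.mp (hy' ▸ one_ne_zero)
  obtain ⟨i₀, hi₀⟩ := Function.ne_iff.mp hσx
  have hfiber : {y : Fin n → ZMod m | (fun i => ∑ j ∈ P i, y j) = y' ∧ hammingDist x y = 1} ⊆
      {y | ∑ j ∈ P i₀, y j = y' i₀ ∧ hammingDist x y = 1} :=
    fun y ⟨hy, hd⟩ => ⟨congrFun hy i₀, hd⟩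
  have himage := hfiber.trans (setOf_sum_eq_and_hammingDist_eq_one_subset_image (P i₀) x hi₀)
  calc Nat.card {y : Fin n → ZMod m // (fun i => ∑ j ∈ P i, y j) = y' ∧ hammingDist x y = 1}
      = Set.ncard {y : Fin n → ZMod m | (fun i => ∑ j ∈ P i, y j) = y' ∧ hammingDist x y = 1} :=
        Nat.card_coe_set_eq _
    _ ≤ #(P i₀) :=
        (Set.ncard_le_ncard himage ((P i₀).finite_toSet.image _)).trans
          ((Set.ncard_image_le (P i₀).finite_toSet).trans (Set.ncard_coe_finset _).le)
    _ ≤ (n + n' - 1) / n' := hsize i₀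

/-- Let `m ≥ 1`, `n ≥ n' ≥ 1`, and let `P₁, …, P_{n'}` be a partition of `{1,…,n}` into `n'`
nonempty blocks each of size at most `⌈n/n'⌉` (i.e. `(n + n' - 1)/n'` in natural-number
division), and let `σ : (ℤ/mℤ)ⁿ → (ℤ/mℤ)^{n'}` be the block-sum map. Then for every
`x ∈ (ℤ/mℤ)ⁿ` and every `y'` at Hamming distance `1` from `σ(x)`, there are at most
`⌈n/n'⌉` points `y ∈ σ⁻¹(y')` at Hamming distance `1` from `x`. -/
theorem blockSum_fiber_neighbors (m n n' : ℕ) (hm : 1 ≤ m) (hn' : 1 ≤ n') (hnn : n' ≤ n)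
    (P : Fin n' → Finset (Fin n))
    (hdisj : Pairwise fun i j => Disjoint (P i) (P j))
    (hcover : ∀ j, ∃ i, j ∈ P i)
    (hne : ∀ i, (P i).Nonempty)
    (hsize : ∀ i, (P i).card ≤ (n + n' - 1) / n')
    (x : Fin n → ZMod m) (y' : Fin n' → ZMod m)
    (hy' : hammingDist (fun i => ∑ j ∈ P i, x j) y' = 1) :
    Nat.card {y : Fin n → ZMod m //
        (fun i => ∑ j ∈ P i, y j) = y' ∧ hammingDist x y = 1}
      ≤ (n + n' - 1) / n' :=
  blockSum_fiber_neighbors_general m n n' P hsize x y' hy'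
end
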